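/- Let q = 2 and e \ge d+1. For all 0 \le i \le d-1 and 1 \le j \le d, the eigenvalues of the bilinear forms graph satisfy |B_j(i)| > |B_j(i+1)|. -/

import Mathlib

/-- The Gaussian binomial coefficient `[m choose l]_q = ∏_{t=1}^{l} (q^{m-t+1}-1)/(q^t-1)`. -/
def gaussBinom (q : ℚ) (m l : ℕ) : ℚ :=
  ∏ t ∈ Finset.range l, (q ^ (m - t) - 1) / (q ^ (t + 1) - 1)

/-- The `h`-th term of the eigenvalue expression for the bilinear forms graph `H_q(d,e,j)`:
`T_h(i,j) = (-1)^{j-h} q^{eh + C(j-h,2)} [d-h, d-j]_q [d-i, h]_q`. -/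
def bilinT (q : ℚ) (d e j i h : ℕ) : ℚ :=
  (-1 : ℚ) ^ (j - h) * q ^ (e * h + (j - h).choose 2) *
    gaussBinom q (d - h) (d - j) * gaussBinom q (d - i) h

/-- The eigenvalue `B_j(i)` of the bilinear forms graph `H_q(d,e,j)`. -/
def bilinB (q : ℚ) (d e j i : ℕ) : ℚ :=
  ∑ h ∈ Finset.range (min j (d - i) + 1), bilinT q d e j i h

/-!
Up to the sign `(-1)^(j-m)`, `B_j(i)` is the alternating sum `T_m - T_{m-1} + ⋯ ± T_0` of the
unsigned terms `T_h = 2^{eh + C(j-h,2)} [d-h, d-j]_2 [d-i, h]_2`, where `m = min j (d-i)`.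
The ratio `T_{h+1} / T_h = 2^e (2^{j-h}-1)(2^{d-i-h}-1) / ((2^{d-h}-1)(2^{h+1}-1) 2^{j-h-1})` is at
least `1` once `e ≥ d + 1`, so the terms increase and `|B_j(i)|` lies between `T_m - T_{m-1}` and
`T_m`. Passing from `i` to `i + 1` multiplies `T_h` by `(2^{d-i-h}-1)/(2^{d-i}-1)`; these two ratios
show that the top term at `i + 1` is smaller than `T_m - T_{m-1}` at `i`, both when `j < d - i`
(the top index stays `j`) and when `d - i ≤ j` (it drops from `d - i` to `d - i - 1`).
-/

open Finset

section GaussBinom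

variable (q : ℚ) (m l : ℕ)

theorem gaussBinom_succ_right_mul (hq : q ^ (l + 1) ≠ 1) :
    gaussBinom q m (l + 1) * (q ^ (l + 1) - 1) = gaussBinom q m l * (q ^ (m - l) - 1) := by
  rw [gaussBinom, prod_range_succ, mul_assoc, div_mul_cancel₀ _ (sub_ne_zero.2 hq)]
  rfl

theorem gaussBinom_succ_succ_mul (hq : q ^ (l + 1) ≠ 1) :
    gaussBinom q (m + 1) (l + 1) * (q ^ (l + 1) - 1) = gaussBinom q m l * (q ^ (m + 1) - 1) := by
  simp only [gaussBinom, prod_div_distrib]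
  rw [prod_range_succ' (fun t => q ^ (m + 1 - t) - 1), prod_range_succ (fun t => q ^ (t + 1) - 1)]
  simp only [Nat.add_sub_add_right, Nat.sub_zero]
  field_simp [sub_ne_zero.2 hq]

theorem gaussBinom_succ_left_mul (hq : q ^ (l + 1) ≠ 1) :
    gaussBinom q (m + 1) l * (q ^ (m + 1 - l) - 1) = gaussBinom q m l * (q ^ (m + 1) - 1) := by
  rw [← gaussBinom_succ_right_mul q (m + 1) l hq, gaussBinom_succ_succ_mul q m l hq]

variable {q m l}

theorem gaussBinom_pos (hq : 1 < q) (h : l ≤ m) : 0 < gaussBinom q m l :=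
  prod_pos fun t ht => by
    have := mem_range.1 ht
    exact div_pos (sub_pos.2 (one_lt_pow₀ hq (by omega)))
      (sub_pos.2 (one_lt_pow₀ hq (by omega)))

end GaussBinom

section AltSum

variable {R : Type*} [CommRing R] (f : ℕ → R)

def altSum (m : ℕ) : R :=
  ∑ h ∈ range (m + 1), (-1) ^ (m - h) * f h

theorem altSum_zero : altSum f 0 = f 0 := by
  simp [altSum]

theorem altSum_succ (m : ℕ) : altSum f (m + 1) = f (m + 1) - altSum f m := by
  rw [altSum, sum_range_succ, Nat.sub_self, pow_zero, one_mul, altSum, add_comm, sub_eq_add_neg,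
    ← sum_neg_distrib]
  congr 1
  refine sum_congr rfl fun h hh => ?_
  rw [show m + 1 - h = m - h + 1 by have := mem_range.1 hh; omega, pow_succ']
  ring

variable [LinearOrder R] [IsOrderedRing R] {f}

theorem altSum_mem_Icc (h0 : 0 ≤ f 0) {m : ℕ} (hf : ∀ h < m, f h ≤ f (h + 1)) :
    altSum f m ∈ Set.Icc 0 (f m) := by
  induction m with
  | zero => simp [altSum_zero, h0]
  | succ m ih =>
    obtain ⟨hlo, hhi⟩ := ih fun h hh => hf h (by omega)
    rw [altSum_succ]
    exact ⟨sub_nonneg.2 (hhi.trans (hf m (by omega))), sub_le_self _ hlo⟩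

theorem sub_le_altSum (h0 : 0 ≤ f 0) {m : ℕ} (hf : ∀ h < m, f h ≤ f (h + 1)) :
    f m - f (m - 1) ≤ altSum f m := by
  cases m with
  | zero => simpa [altSum_zero] using h0
  | succ m =>
    rw [altSum_succ, Nat.add_sub_cancel]
    exact sub_le_sub_left (altSum_mem_Icc h0 fun h hh => hf h (by omega)).2 _

end AltSum

def bilinTAbs (q : ℚ) (d e j i h : ℕ) : ℚ :=
  q ^ (e * h + (j - h).choose 2) * gaussBinom q (d - h) (d - j) * gaussBinom q (d - i) h

theorem bilinB_eq_altSum (q : ℚ) (d e j i : ℕ) :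
    bilinB q d e j i =
      (-1) ^ (j - min j (d - i)) * altSum (bilinTAbs q d e j i) (min j (d - i)) := by
  rw [bilinB, altSum, mul_sum]
  refine sum_congr rfl fun h hh => ?_
  rw [bilinT, bilinTAbs, ← mul_assoc, ← pow_add, Nat.sub_add_sub_cancel (min_le_left _ _)
    (by have := mem_range.1 hh; omega)]
  ring

theorem abs_bilinB (q : ℚ) (d e j i : ℕ) :
    |bilinB q d e j i| = |altSum (bilinTAbs q d e j i) (min j (d - i))| := by
  rw [bilinB_eq_altSum, abs_mul, abs_pow, abs_neg, abs_one, one_pow, one_mul]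

section BilinTAbs

variable {q : ℚ} {d e j i h : ℕ}

theorem bilinTAbs_pos (hq : 1 < q) (hh : h ≤ j) (hj : j ≤ d) (hhi : h ≤ d - i) :
    0 < bilinTAbs q d e j i h := by
  unfold bilinTAbs
  have := gaussBinom_pos (m := d - h) (l := d - j) hq (by omega)
  have := gaussBinom_pos hq hhi
  positivity

theorem bilinTAbs_succ_mul (hq : 1 < q) (hh : h < j) (hj : j ≤ d) :
    bilinTAbs q d e j i (h + 1) * ((q ^ (d - h) - 1) * (q ^ (h + 1) - 1) * q ^ (j - h - 1)) =
      bilinTAbs q d e j i h * (q ^ e * (q ^ (j - h) - 1) * (q ^ (d - i - h) - 1)) := by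
  have hcol := gaussBinom_succ_right_mul q (d - i) h (one_lt_pow₀ hq h.succ_ne_zero).ne'
  have hrow := gaussBinom_succ_left_mul q (d - (h + 1)) (d - j) (one_lt_pow₀ hq (by omega)).ne'
  rw [show d - (h + 1) + 1 = d - h by omega, show d - h - (d - j) = j - h by omega] at hrow
  have hexp : e * (h + 1) + (j - (h + 1)).choose 2 + (j - h - 1) =
      e * h + (j - h).choose 2 + e := by
    obtain ⟨k, hk⟩ : ∃ k, j - h = k + 1 := ⟨j - h - 1, by omega⟩
    rw [hk, show j - (h + 1) = k by omega, Nat.choose_succ_succ, Nat.choose_one_right,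
      Nat.add_sub_cancel]
    ring
  calc bilinTAbs q d e j i (h + 1) * ((q ^ (d - h) - 1) * (q ^ (h + 1) - 1) * q ^ (j - h - 1))
      = gaussBinom q (d - (h + 1)) (d - j) * (q ^ (d - h) - 1) *
          (gaussBinom q (d - i) (h + 1) * (q ^ (h + 1) - 1)) *
          q ^ (e * (h + 1) + (j - (h + 1)).choose 2 + (j - h - 1)) := by
        rw [bilinTAbs, pow_add]; ring
    _ = gaussBinom q (d - h) (d - j) * (q ^ (j - h) - 1) *
          (gaussBinom q (d - i) h * (q ^ (d - i - h) - 1)) *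
          q ^ (e * h + (j - h).choose 2 + e) := by rw [← hrow, hcol, hexp]
    _ = bilinTAbs q d e j i h * (q ^ e * (q ^ (j - h) - 1) * (q ^ (d - i - h) - 1)) := by
        rw [bilinTAbs, pow_add]; ring

theorem bilinTAbs_succ_left_mul (hq : 1 < q) (hi : i < d) :
    bilinTAbs q d e j (i + 1) h * (q ^ (d - i) - 1) =
      bilinTAbs q d e j i h * (q ^ (d - i - h) - 1) := by
  have hrow := gaussBinom_succ_left_mul q (d - (i + 1)) h (one_lt_pow₀ hq h.succ_ne_zero).ne'
  rw [show d - (i + 1) + 1 = d - i by omega] at hrow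
  rw [bilinTAbs, bilinTAbs, mul_assoc, ← hrow]
  ring

end BilinTAbs

section QEqTwo

variable {d e j i h : ℕ}

theorem two_pow_sub_one_nonneg (a : ℕ) : 0 ≤ (2 : ℚ) ^ a - 1 :=
  sub_nonneg.2 (one_le_pow₀ one_le_two)

theorem two_pow_sub_one_pos {a : ℕ} (ha : a ≠ 0) : 0 < (2 : ℚ) ^ a - 1 :=
  sub_pos.2 (one_lt_pow₀ one_lt_two ha)

theorem two_pow_pred_le {a : ℕ} (ha : 0 < a) : (2 : ℚ) ^ (a - 1) ≤ 2 ^ a - 1 := by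
  obtain ⟨b, rfl⟩ := Nat.exists_eq_add_of_lt ha
  rw [zero_add, Nat.add_sub_cancel, pow_succ]
  linarith [one_le_pow₀ (M₀ := ℚ) one_le_two (n := b)]

theorem bilinTAbs_two_le_succ (he : d + 1 ≤ e) (hh : h < j) (hhi : h < d - i) (hj : j ≤ d) :
    bilinTAbs 2 d e j i h ≤ bilinTAbs 2 d e j i (h + 1) := by
  have key : ((2 : ℚ) ^ (d - h) - 1) * (2 ^ (h + 1) - 1) * 2 ^ (j - h - 1) ≤
      2 ^ e * (2 ^ (j - h) - 1) * (2 ^ (d - i - h) - 1) :=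
    calc ((2 : ℚ) ^ (d - h) - 1) * (2 ^ (h + 1) - 1) * 2 ^ (j - h - 1)
        ≤ 2 ^ (d - h) * 2 ^ (h + 1) * 2 ^ (j - h - 1) := by
          gcongr
          · exact two_pow_sub_one_nonneg _
          · exact sub_le_self _ zero_le_one
          · exact sub_le_self _ zero_le_one
      _ = 2 ^ (d + (j - h)) := by rw [← pow_add, ← pow_add]; congr 1; omega
      _ ≤ 2 ^ (e + (j - h - 1) + (d - i - h - 1)) := pow_le_pow_right₀ one_le_two (by omega)
      _ = 2 ^ e * 2 ^ (j - h - 1) * 2 ^ (d - i - h - 1) := by rw [pow_add, pow_add]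
      _ ≤ 2 ^ e * (2 ^ (j - h) - 1) * (2 ^ (d - i - h) - 1) := by
          gcongr
          · exact mul_nonneg (by positivity) (two_pow_sub_one_nonneg _)
          · exact two_pow_pred_le (by omega)
          · exact two_pow_pred_le (by omega)
  have hpos : (0 : ℚ) < (2 ^ (d - h) - 1) * (2 ^ (h + 1) - 1) * 2 ^ (j - h - 1) :=
    mul_pos (mul_pos (two_pow_sub_one_pos (by omega)) (two_pow_sub_one_pos (by omega)))
      (by positivity)
  refine le_of_mul_le_mul_right ?_ hpos
  rw [bilinTAbs_succ_mul one_lt_two hh hj]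
  exact mul_le_mul_of_nonneg_left key (bilinTAbs_pos one_lt_two hh.le hj hhi.le).le

theorem two_pow_sub_one_mul_lt {d e k n : ℕ} (he : d + 1 ≤ e) (hkn : k + 1 < n) (hn : n ≤ d) :
    ((2 : ℚ) ^ (d - k) - 1) * (2 ^ n - 1) < 2 ^ e * 2 ^ (n - (k + 1)) * (2 ^ (n - k) - 1) :=
  calc ((2 : ℚ) ^ (d - k) - 1) * (2 ^ n - 1)
      < 2 ^ (d - k) * 2 ^ n :=
        mul_lt_mul'' (sub_one_lt _) (sub_one_lt _) (two_pow_sub_one_nonneg _)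
          (two_pow_sub_one_nonneg _)
    _ = 2 ^ (d - k + n) := (pow_add _ _ _).symm
    _ ≤ 2 ^ (e + (n - (k + 1)) + (n - k - 1)) := pow_le_pow_right₀ one_le_two (by omega)
    _ = 2 ^ e * 2 ^ (n - (k + 1)) * 2 ^ (n - k - 1) := by rw [pow_add, pow_add]
    _ ≤ 2 ^ e * 2 ^ (n - (k + 1)) * (2 ^ (n - k) - 1) := by
        gcongr
        exact two_pow_pred_le (by omega)

theorem two_pow_mul_two_pow_sub_one_lt {e i j n : ℕ} (he : i + n + 2 ≤ e) (hnj : n < j) :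
    (2 : ℚ) ^ j * (2 ^ (i + 1) - 1) < 2 ^ e * (2 ^ (j - n) - 1) :=
  calc (2 : ℚ) ^ j * (2 ^ (i + 1) - 1)
      < 2 ^ j * 2 ^ (i + 1) := mul_lt_mul_of_pos_left (sub_one_lt _) (by positivity)
    _ = 2 ^ (j + (i + 1)) := (pow_add _ _ _).symm
    _ ≤ 2 ^ (e + (j - n - 1)) := pow_le_pow_right₀ one_le_two (by omega)
    _ = 2 ^ e * 2 ^ (j - n - 1) := pow_add _ _ _
    _ ≤ 2 ^ e * (2 ^ (j - n) - 1) := by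
        gcongr
        exact two_pow_pred_le (by omega)

theorem bilinTAbs_two_lt_sub_of_lt (he : d + 1 ≤ e) (hj : 0 < j) (hjn : j < d - i) :
    bilinTAbs 2 d e j (i + 1) j < bilinTAbs 2 d e j i j - bilinTAbs 2 d e j i (j - 1) := by
  obtain ⟨k, rfl⟩ : ∃ k, j = k + 1 := ⟨j - 1, by omega⟩
  rw [Nat.add_sub_cancel]
  set a := bilinTAbs 2 d e (k + 1) i (k + 1)
  set x := bilinTAbs 2 d e (k + 1) (i + 1) (k + 1)
  set y := bilinTAbs 2 d e (k + 1) i k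
  have ha : 0 < a := bilinTAbs_pos one_lt_two le_rfl (by omega) hjn.le
  have hx : x * (2 ^ (d - i) - 1) = a * (2 ^ (d - i - (k + 1)) - 1) :=
    bilinTAbs_succ_left_mul one_lt_two (by omega)
  have hy : a * ((2 ^ (d - k) - 1) * (2 ^ (k + 1) - 1)) = y * (2 ^ e * (2 ^ (d - i - k) - 1)) := by
    have := bilinTAbs_succ_mul (d := d) (e := e) (i := i) one_lt_two (lt_add_one k) (by omega)
    norm_num at this
    exact this
  have hsplit : (2 : ℚ) ^ (d - i) = 2 ^ (d - i - (k + 1)) * 2 ^ (k + 1) := by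
    rw [← pow_add, Nat.sub_add_cancel hjn.le]
  have hax : (a - x) * (2 ^ (d - i) - 1) = a * 2 ^ (d - i - (k + 1)) * (2 ^ (k + 1) - 1) := by
    linear_combination -hx + a * hsplit
  have hK : (0 : ℚ) < 2 ^ e * (2 ^ (d - i - k) - 1) * (2 ^ (d - i) - 1) :=
    mul_pos (mul_pos (by positivity) (two_pow_sub_one_pos (by omega)))
      (two_pow_sub_one_pos (by omega))
  have hyK : y * (2 ^ e * (2 ^ (d - i - k) - 1) * (2 ^ (d - i) - 1)) <
      (a - x) * (2 ^ e * (2 ^ (d - i - k) - 1) * (2 ^ (d - i) - 1)) :=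
    calc y * (2 ^ e * (2 ^ (d - i - k) - 1) * (2 ^ (d - i) - 1))
        = a * (2 ^ (k + 1) - 1) * ((2 ^ (d - k) - 1) * (2 ^ (d - i) - 1)) := by
          linear_combination (-(2 ^ (d - i) - 1 : ℚ)) * hy
      _ < a * (2 ^ (k + 1) - 1) * (2 ^ e * 2 ^ (d - i - (k + 1)) * (2 ^ (d - i - k) - 1)) :=
          mul_lt_mul_of_pos_left (two_pow_sub_one_mul_lt he hjn (Nat.sub_le d i))
            (mul_pos ha (two_pow_sub_one_pos (by omega)))
      _ = (a - x) * (2 ^ e * (2 ^ (d - i - k) - 1) * (2 ^ (d - i) - 1)) := by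
          linear_combination (-(2 ^ e * (2 ^ (d - i - k) - 1) : ℚ)) * hax
  linarith [lt_of_mul_lt_mul_right hyK hK.le]

theorem bilinTAbs_two_lt_sub_of_le (he : d + 1 ≤ e) (hj : j ≤ d) (hi : i < d)
    (hnj : d - i ≤ j) :
    bilinTAbs 2 d e j (i + 1) (d - i - 1) <
      bilinTAbs 2 d e j i (d - i) - bilinTAbs 2 d e j i (d - i - 1) := by
  obtain ⟨n, hn⟩ : ∃ n, d - i = n + 1 := ⟨d - i - 1, by omega⟩
  rw [hn, Nat.add_sub_cancel]
  set a := bilinTAbs 2 d e j i (n + 1)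
  set b := bilinTAbs 2 d e j i n
  set c := bilinTAbs 2 d e j (i + 1) n
  have ha : 0 < a := bilinTAbs_pos one_lt_two (by omega) hj hn.ge
  have hc : c * (2 ^ (n + 1) - 1) = b := by
    have := bilinTAbs_succ_left_mul (d := d) (e := e) (j := j) (h := n) one_lt_two hi
    rw [hn, Nat.add_sub_cancel_left] at this
    norm_num at this
    exact this
  have hb : a * ((2 ^ (i + 1) - 1) * (2 ^ (n + 1) - 1) * 2 ^ (j - n - 1)) =
      b * (2 ^ e * (2 ^ (j - n) - 1)) := by
    have := bilinTAbs_succ_mul (d := d) (e := e) (i := i) one_lt_two (show n < j by omega) hj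
    rw [show d - n = i + 1 by omega, hn, Nat.add_sub_cancel_left] at this
    norm_num at this
    exact this
  have hsplit : (2 : ℚ) ^ j = 2 ^ (j - n - 1) * 2 ^ (n + 1) := by
    rw [← pow_add, Nat.sub_sub, Nat.sub_add_cancel (by omega)]
  have hK : (0 : ℚ) < (2 ^ (n + 1) - 1) * (2 ^ e * (2 ^ (j - n) - 1)) :=
    mul_pos (two_pow_sub_one_pos (by omega))
      (mul_pos (by positivity) (two_pow_sub_one_pos (by omega)))
  have hcbK : (c + b) * ((2 ^ (n + 1) - 1) * (2 ^ e * (2 ^ (j - n) - 1))) <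
      a * ((2 ^ (n + 1) - 1) * (2 ^ e * (2 ^ (j - n) - 1))) :=
    calc (c + b) * ((2 ^ (n + 1) - 1) * (2 ^ e * (2 ^ (j - n) - 1)))
        = 2 ^ (n + 1) * (b * (2 ^ e * (2 ^ (j - n) - 1))) := by
          linear_combination (2 ^ e * (2 ^ (j - n) - 1) : ℚ) * hc
      _ = a * (2 ^ (n + 1) - 1) * (2 ^ j * (2 ^ (i + 1) - 1)) := by rw [← hb, hsplit]; ring
      _ < a * (2 ^ (n + 1) - 1) * (2 ^ e * (2 ^ (j - n) - 1)) :=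
          mul_lt_mul_of_pos_left (two_pow_mul_two_pow_sub_one_lt (by omega) (by omega))
            (mul_pos ha (two_pow_sub_one_pos (by omega)))
      _ = a * ((2 ^ (n + 1) - 1) * (2 ^ e * (2 ^ (j - n) - 1))) := by ring
  linarith [lt_of_mul_lt_mul_right hcbK hK.le]

theorem bilinTAbs_two_monotone (he : d + 1 ≤ e) (hj : j ≤ d) :
    ∀ h < min j (d - i), bilinTAbs 2 d e j i h ≤ bilinTAbs 2 d e j i (h + 1) :=
  fun _ hh => bilinTAbs_two_le_succ he (lt_min_iff.1 hh).1 (lt_min_iff.1 hh).2 hj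

theorem bilinTAbs_two_zero_nonneg (hj : j ≤ d) : 0 ≤ bilinTAbs 2 d e j i 0 :=
  (bilinTAbs_pos one_lt_two (Nat.zero_le _) hj (Nat.zero_le _)).le

theorem abs_bilinB_two_le (he : d + 1 ≤ e) (hj : j ≤ d) :
    |bilinB 2 d e j i| ≤ bilinTAbs 2 d e j i (min j (d - i)) := by
  have := altSum_mem_Icc (bilinTAbs_two_zero_nonneg hj) (bilinTAbs_two_monotone (i := i) he hj)
  rw [abs_bilinB, abs_of_nonneg this.1]
  exact this.2

theorem sub_le_abs_bilinB_two (he : d + 1 ≤ e) (hj : j ≤ d) :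
    bilinTAbs 2 d e j i (min j (d - i)) - bilinTAbs 2 d e j i (min j (d - i) - 1) ≤
      |bilinB 2 d e j i| := by
  rw [abs_bilinB]
  exact (sub_le_altSum (bilinTAbs_two_zero_nonneg hj) (bilinTAbs_two_monotone he hj)).trans
    (le_abs_self _)

end QEqTwo

theorem bilinB_abs_strict_anti_q2 (d e i j : ℕ) (he : d + 1 ≤ e)
    (hi : i ≤ d - 1) (hj1 : 1 ≤ j) (hj2 : j ≤ d) :
    |bilinB (2 : ℚ) d e j (i + 1)| < |bilinB (2 : ℚ) d e j i| := by
  refine (abs_bilinB_two_le he hj2).trans_lt (lt_of_lt_of_le ?_ (sub_le_abs_bilinB_two he hj2))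
  rcases lt_or_ge j (d - i) with hjn | hnj
  · rw [min_eq_left hjn.le, min_eq_left (by omega)]
    exact bilinTAbs_two_lt_sub_of_lt he hj1 hjn
  · rw [min_eq_right hnj, min_eq_right (by omega), Nat.sub_sub]
    exact bilinTAbs_two_lt_sub_of_le he hj2 (by omega) hnj
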